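/- Under the adjoint action of the standard SO(3) ⊂ SU(3) on 𝔰𝔲(3) ≅ Λ²(ℝ³) ⊕ i·S²₀(ℝ³) (skew-symmetric real part plus i times traceless symmetric real part), every element whose stabiliser in SO(3) is at least one-dimensional is SO(3)-conjugate to an element of the form [[iμ, −λ, 0],[λ, iμ, 0],[0, 0, −2iμ]] for some λ, μ ∈ ℝ. -/

import Mathlib

/-!
If every element of the stabiliser were a symmetric matrix, the stabiliser would be a monoid of
commuting involutions in `SO(3)`; the products of two distinct ones have trace `-1`, so the trace
form has Gram matrix `4 - J` on any finite subset, which is positive semidefinite only for at most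
four elements. Hence an infinite stabiliser contains a rotation `g` with `gᵀ ≠ g`. Conjugating `g`
into a rotation about the third axis through an angle with `sin ≠ 0`, everything commuting with
it is block diagonal `[[a, -b, 0], [b, a, 0], [0, 0, d]]`; for a traceless skew-Hermitian matrix
this forces `a = iμ`, `b = λ` real and `d = -2iμ`.
-/

open Complex Matrix ComplexConjugate

theorem Commute.conj_of_mul_eq_one {M : Type*} [Monoid M] {a b x y : M} (hba : b * a = 1)
    (h : Commute x y) : Commute (a * x * b) (a * y * b) := by
  have hcancel : ∀ z, b * (a * z) = z := fun z => by rw [← mul_assoc, hba, one_mul]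
  simp only [Commute, SemiconjBy, mul_assoc, hcancel]
  rw [← mul_assoc x, h.eq, mul_assoc]

namespace Matrix

/-- Cayley–Hamilton for `3 × 3` matrices, doubled so that the linear coefficient
`((tr k)² - tr (k²)) / 2` of the characteristic polynomial needs no division. -/
theorem cayley_hamilton_fin_three {R : Type*} [CommRing R] (k : Matrix (Fin 3) (Fin 3) R) :
    (2 : R) • (k * k * k) - (2 * k.trace) • (k * k) + (k.trace ^ 2 - (k * k).trace) • k
      - (2 * k.det) • (1 : Matrix (Fin 3) (Fin 3) R) = 0 := by
  ext i j
  fin_cases i <;> fin_cases j <;>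
    simp [mul_apply, Fin.sum_univ_succ, det_fin_three, trace_fin_three] <;> ring

theorem trace_eq_neg_one_of_mul_self_eq_one {K : Type*} [Field K] [CharZero K]
    {k : Matrix (Fin 3) (Fin 3) K} (hsq : k * k = 1) (hdet : k.det = 1) (hne : k ≠ 1) :
    k.trace = -1 := by
  by_contra ht
  have hch := cayley_hamilton_fin_three k
  rw [hsq, one_mul, hdet, trace_one, Fintype.card_fin] at hch
  have hk : (k.trace - 1) • k = (2 : K) • 1 := by
    have h : (k.trace + 1) • ((k.trace - 1) • k - (2 : K) • 1) = 0 := by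
      rw [← hch]; push_cast; module
    rw [smul_eq_zero, sub_eq_zero] at h
    exact h.resolve_left fun h => ht (by linear_combination h)
  have hk' : (2 : K) • k = (k.trace - 1) • 1 := by
    simpa [smul_mul_assoc, hsq] using (congrArg (· * k) hk).symm
  have ht3 : k.trace = 3 := by
    have h := congrArg trace hk'
    simp only [trace_smul, trace_one, Fintype.card_fin, smul_eq_mul] at h
    push_cast at h
    linear_combination -h
  rw [ht3] at hk
  norm_num at hk
  exact hne hk

theorem trace_mul_transpose_self_nonneg {m n : Type*} [Fintype m] [Fintype n]
    (M : Matrix m n ℝ) : 0 ≤ (M * Mᵀ).trace := by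
  simpa [conjTranspose_eq_transpose_of_trivial] using
    (posSemidef_self_mul_conjTranspose M).trace_nonneg

section SymmetricRotations

variable {S : Submonoid (Matrix (Fin 3) (Fin 3) ℝ)}
  (hSO : S ≤ specialOrthogonalGroup (Fin 3) ℝ) (hsym : ∀ g ∈ S, gᵀ = g)
include hSO hsym

theorem mul_self_eq_one_of_forall_transpose_eq {g : Matrix (Fin 3) (Fin 3) ℝ} (hg : g ∈ S) :
    g * g = 1 := by
  simpa [hsym g hg] using (mem_orthogonalGroup_iff _ _).mp (hSO hg).1

theorem trace_mul_of_forall_transpose_eq {X Y : Matrix (Fin 3) (Fin 3) ℝ} (hX : X ∈ S)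
    (hY : Y ∈ S) : (X * Y).trace = if X = Y then 3 else -1 := by
  split_ifs with hXY
  · rw [hXY, mul_self_eq_one_of_forall_transpose_eq hSO hsym hY, trace_one]
    norm_num
  have hXYS : X * Y ∈ S := mul_mem hX hY
  refine trace_eq_neg_one_of_mul_self_eq_one
    (mul_self_eq_one_of_forall_transpose_eq hSO hsym hXYS) (hSO hXYS).2 fun h => hXY ?_
  calc X = X * (Y * Y) := by rw [mul_self_eq_one_of_forall_transpose_eq hSO hsym hY, mul_one]
    _ = Y := by rw [← mul_assoc, h, one_mul]

/-- `tr (T Tᵀ) ≥ 0` for `T = ∑ t`, while `tr (T * T) = |t| (4 - |t|)` by the Gram computation. -/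
theorem card_le_four_of_forall_transpose_eq {t : Finset (Matrix (Fin 3) (Fin 3) ℝ)}
    (ht : ↑t ⊆ (S : Set (Matrix (Fin 3) (Fin 3) ℝ))) : t.card ≤ 4 := by
  set T := ∑ X ∈ t, X
  have htrace : (T * T).trace = t.card * (4 - t.card) := calc
    (T * T).trace = ∑ X ∈ t, ∑ Y ∈ t, (X * Y).trace := by
      rw [Finset.sum_mul_sum]
      simp_rw [trace_sum]
    _ = ∑ X ∈ t, ∑ Y ∈ t, ((if X = Y then 4 else 0) - 1 : ℝ) := by
      refine Finset.sum_congr rfl fun X hX => Finset.sum_congr rfl fun Y hY => ?_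
      rw [trace_mul_of_forall_transpose_eq hSO hsym (ht hX) (ht hY)]
      split_ifs <;> norm_num
    _ = ∑ X ∈ t, (4 - t.card : ℝ) := by
      refine Finset.sum_congr rfl fun X hX => ?_
      rw [Finset.sum_sub_distrib, Finset.sum_ite_eq, if_pos hX]
      simp
    _ = t.card * (4 - t.card) := by simp [mul_sub]
  have hT : Tᵀ = T := by
    rw [transpose_sum]
    exact Finset.sum_congr rfl fun X hX => hsym X (ht hX)
  have hnonneg := trace_mul_transpose_self_nonneg T
  rw [hT, htrace] at hnonneg
  by_contra! h
  have h' : (4 : ℝ) < t.card := by exact_mod_cast h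
  nlinarith

theorem finite_of_forall_transpose_eq : (S : Set (Matrix (Fin 3) (Fin 3) ℝ)).Finite := by
  by_contra h
  obtain ⟨t, ht, hcard⟩ := Set.Infinite.exists_subset_card_eq h 5
  have := card_le_four_of_forall_transpose_eq hSO hsym ht
  omega

end SymmetricRotations

theorem det_sub_one_eq_zero_of_mem_specialOrthogonalGroup {n : Type*} [Fintype n] [DecidableEq n]
    (hn : Odd (Fintype.card n)) {g : Matrix n n ℝ} (hg : g ∈ specialOrthogonalGroup n ℝ) :
    (g - 1).det = 0 := by
  have hgo : g * gᵀ = 1 := (mem_orthogonalGroup_iff _ _).mp hg.1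
  have h : g - 1 = -(g * (g - 1)ᵀ) := by
    rw [transpose_sub, transpose_one, mul_sub, hgo, mul_one, neg_sub]
  have : (g - 1).det = -(g - 1).det := by
    conv_lhs => rw [h]
    rw [det_neg, hn.neg_one_pow, det_mul, (mem_specialOrthogonalGroup_iff.mp hg).2, det_transpose]
    ring
  linarith

theorem mem_specialOrthogonalGroup_or_neg_mem {n : Type*} [Fintype n] [DecidableEq n]
    (hn : Odd (Fintype.card n)) {Q : Matrix n n ℝ} (hQ : Q ∈ orthogonalGroup n ℝ) :
    Q ∈ specialOrthogonalGroup n ℝ ∨ -Q ∈ specialOrthogonalGroup n ℝ := by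
  have hQQ : Q * Qᵀ = 1 := (mem_orthogonalGroup_iff _ _).mp hQ
  have hdet : Q.det * Q.det = 1 := by
    simpa [det_transpose] using congrArg det hQQ
  have hneg : -Q ∈ orthogonalGroup n ℝ := by
    rw [mem_orthogonalGroup_iff]; simpa using hQQ
  rcases mul_self_eq_one_iff.mp hdet with h | h
  · exact Or.inl ⟨hQ, h⟩
  · refine Or.inr ⟨hneg, ?_⟩
    show (-Q).det = 1
    rw [det_neg, hn.neg_one_pow, h]; norm_num

theorem transpose_mem_specialOrthogonalGroup {n : Type*} [Fintype n] [DecidableEq n]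
    {P : Matrix n n ℝ} (hP : P ∈ specialOrthogonalGroup n ℝ) :
    Pᵀ ∈ specialOrthogonalGroup n ℝ :=
  mem_specialOrthogonalGroup_iff.mpr ⟨transpose_mem_unitaryGroup_iff.mpr hP.1,
    (det_transpose P).trans (mem_specialOrthogonalGroup_iff.mp hP).2⟩

theorem transpose_eq_self_of_conj {n : Type*} [Fintype n] [DecidableEq n] {P g : Matrix n n ℝ}
    (hP : P ∈ orthogonalGroup n ℝ) (h : (P * g * Pᵀ)ᵀ = P * g * Pᵀ) : gᵀ = g := by
  have hPP : Pᵀ * P = 1 := (mem_orthogonalGroup_iff' _ _).mp hP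
  have hcancel : ∀ X, Pᵀ * (P * X * Pᵀ) * P = X := fun X => by
    rw [show Pᵀ * (P * X * Pᵀ) * P = Pᵀ * P * X * (Pᵀ * P) by simp only [mul_assoc], hPP,
      one_mul, mul_one]
  calc gᵀ = Pᵀ * (P * gᵀ * Pᵀ) * P := (hcancel _).symm
    _ = Pᵀ * (P * g * Pᵀ) * P := by
      rw [← h]
      simp only [transpose_mul, transpose_transpose, mul_assoc]
    _ = g := hcancel g

theorem exists_mem_orthogonalGroup_col_eq {ι : Type*} [Fintype ι] [DecidableEq ι]
    {v : EuclideanSpace ℝ ι} (hv : ‖v‖ = 1) (i : ι) :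
    ∃ Q ∈ orthogonalGroup ι ℝ, Q.col i = v := by
  have hON : Orthonormal ℝ (({i} : Set ι).domRestrict fun _ => v) :=
    ⟨fun _ => hv, fun j k hjk => absurd (Subtype.ext (j.2.trans k.2.symm)) hjk⟩
  obtain ⟨b, hb⟩ := hON.exists_orthonormalBasis_extension_of_card_eq (by simp)
  refine ⟨_, (EuclideanSpace.basisFun ι ℝ).toMatrix_orthonormalBasis_mem_orthogonal b, ?_⟩
  ext k
  rw [col_apply, Module.Basis.toMatrix_apply, hb i rfl]
  simp

theorem exists_conj_mulVec_single_eq {n : Type*} [Fintype n] [DecidableEq n]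
    (hn : Odd (Fintype.card n)) {g : Matrix n n ℝ} (hg : g ∈ specialOrthogonalGroup n ℝ)
    (i : n) :
    ∃ P ∈ specialOrthogonalGroup n ℝ, (P * g * Pᵀ) *ᵥ Pi.single i 1 = Pi.single i 1 := by
  obtain ⟨u, hu0, hgu⟩ :=
    exists_mulVec_eq_zero_iff.mpr (det_sub_one_eq_zero_of_mem_specialOrthogonalGroup hn hg)
  rw [sub_mulVec, one_mulVec, sub_eq_zero] at hgu
  have hv : ‖‖WithLp.toLp 2 u‖⁻¹ • WithLp.toLp 2 u‖ = 1 :=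
    norm_smul_inv_norm (by simpa using hu0)
  obtain ⟨Q, hQ, hQv⟩ := exists_mem_orthogonalGroup_col_eq hv i
  have hgQ : g *ᵥ Q.col i = Q.col i := by
    rw [hQv]
    simp [mulVec_smul, hgu]
  have hconj : (Qᵀ * g * Q) *ᵥ Pi.single i 1 = Pi.single i 1 := by
    rw [← mulVec_mulVec, ← mulVec_mulVec, mulVec_single_one, hgQ, ← mulVec_single_one,
      mulVec_mulVec, (mem_orthogonalGroup_iff' _ _).mp hQ, one_mulVec]
  -- Replacing `Qᵀ` by `-Qᵀ` fixes the orientation without changing the conjugate of `g`.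
  rcases mem_specialOrthogonalGroup_or_neg_mem hn (transpose_mem_unitaryGroup_iff.mpr hQ) with h | h
  · exact ⟨Qᵀ, h, by simpa using hconj⟩
  · exact ⟨-Qᵀ, h, by simpa using hconj⟩

def rotationZ {R : Type*} [Ring R] (c s : R) : Matrix (Fin 3) (Fin 3) R :=
  !![c, -s, 0; s, c, 0; 0, 0, 1]

theorem rotationZ_transpose {R : Type*} [Ring R] (c s : R) :
    (rotationZ c s)ᵀ = rotationZ c (-s) := by
  ext i j; fin_cases i <;> fin_cases j <;> simp [rotationZ]

theorem exists_eq_rotationZ_of_mulVec_single_eq {R : Matrix (Fin 3) (Fin 3) ℝ}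
    (hR : R ∈ specialOrthogonalGroup (Fin 3) ℝ) (hfix : R *ᵥ Pi.single 2 1 = Pi.single 2 1) :
    ∃ c s : ℝ, c ^ 2 + s ^ 2 = 1 ∧ R = rotationZ c s := by
  have hRo : Rᵀ * R = 1 := (mem_orthogonalGroup_iff' _ _).mp hR.1
  have hfixT : Rᵀ *ᵥ Pi.single 2 1 = Pi.single 2 1 := by
    conv_lhs => rw [← hfix]
    rw [mulVec_mulVec, hRo, one_mulVec]
  have h02 : R 0 2 = 0 := by simpa using congrFun hfix 0
  have h12 : R 1 2 = 0 := by simpa using congrFun hfix 1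
  have h22 : R 2 2 = 1 := by simpa using congrFun hfix 2
  have h20 : R 2 0 = 0 := by simpa using congrFun hfixT 0
  have h21 : R 2 1 = 0 := by simpa using congrFun hfixT 1
  have hnorm : R 0 0 ^ 2 + R 1 0 ^ 2 = 1 := by
    have := congrFun (congrFun hRo 0) 0
    simp only [mul_apply, transpose_apply, Fin.sum_univ_three, h20, one_apply_eq] at this
    linear_combination this
  have horth : R 0 0 * R 0 1 + R 1 0 * R 1 1 = 0 := by
    have := congrFun (congrFun hRo 0) 1
    simp only [mul_apply, transpose_apply, Fin.sum_univ_three, h20,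
      one_apply_ne (show (0 : Fin 3) ≠ 1 by decide)] at this
    linear_combination this
  have hdet : R 0 0 * R 1 1 - R 0 1 * R 1 0 = 1 := by
    have := (mem_specialOrthogonalGroup_iff.mp hR).2
    rw [det_fin_three, h02, h12, h20, h21, h22] at this
    linear_combination this
  have h01 : R 0 1 = -R 1 0 := by
    linear_combination R 0 0 * horth - R 1 0 * hdet - R 0 1 * hnorm
  have h11 : R 1 1 = R 0 0 := by
    linear_combination R 0 0 * hdet + R 1 0 * horth - R 1 1 * hnorm
  refine ⟨R 0 0, R 1 0, hnorm, ?_⟩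
  conv_lhs => rw [eta_fin_three R]
  rw [h01, h02, h11, h12, h20, h21, h22, rotationZ]

theorem exists_conj_eq_rotationZ {g : Matrix (Fin 3) (Fin 3) ℝ}
    (hg : g ∈ specialOrthogonalGroup (Fin 3) ℝ) :
    ∃ P ∈ specialOrthogonalGroup (Fin 3) ℝ, ∃ c s : ℝ, c ^ 2 + s ^ 2 = 1 ∧
      P * g * Pᵀ = rotationZ c s := by
  obtain ⟨P, hP, hfix⟩ := exists_conj_mulVec_single_eq (by decide) hg 2
  obtain ⟨c, s, hcs, h⟩ := exists_eq_rotationZ_of_mulVec_single_eq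
    (mul_mem (mul_mem hP hg) (transpose_mem_specialOrthogonalGroup hP)) hfix
  exact ⟨P, hP, c, s, hcs, h⟩

theorem exists_eq_of_commute_rotationZ {K : Type*} [Field K] [NeZero (2 : K)] {c s : K}
    (hs : s ≠ 0) (hcs : c ^ 2 + s ^ 2 = 1) {M : Matrix (Fin 3) (Fin 3) K}
    (h : Commute (rotationZ c s) M) : ∃ a b d : K, M = !![a, -b, 0; b, a, 0; 0, 0, d] := by
  have E : ∀ i j, (rotationZ c s * M) i j = (M * rotationZ c s) i j := fun i j => by rw [h.eq]
  have E00 := E 0 0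
  have E01 := E 0 1
  have E02 := E 0 2
  have E12 := E 1 2
  have E20 := E 2 0
  have E21 := E 2 1
  simp only [rotationZ, mul_apply, of_apply, cons_val', cons_val_fin_one, cons_val_zero,
    cons_val_one, cons_val, Fin.sum_univ_three, neg_mul, zero_mul, add_zero, mul_zero, mul_neg,
    mul_one, zero_add, one_mul] at E00 E01 E02 E12 E20 E21
  have hc : 2 * (1 - c) ≠ 0 := by
    refine mul_ne_zero two_ne_zero fun hc => hs (pow_eq_zero_iff two_ne_zero |>.mp ?_)
    linear_combination hcs + (1 + c) * hc
  -- The pairs `(M 0 2, M 1 2)` and `(M 2 0, M 2 1)` solve linear systems of determinant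
  -- `(1 - c)² + s² = 2 (1 - c)`.
  have h02 : M 0 2 = 0 := by
    refine (mul_eq_zero.mp ?_).resolve_left hc
    linear_combination (c - 1) * E02 + s * E12 - M 0 2 * hcs
  have h12 : M 1 2 = 0 := by
    refine (mul_eq_zero.mp ?_).resolve_left hc
    linear_combination (c - 1) * E12 - s * E02 - M 1 2 * hcs
  have h20 : M 2 0 = 0 := by
    refine (mul_eq_zero.mp ?_).resolve_left hc
    linear_combination (1 - c) * E20 + s * E21 - M 2 0 * hcs
  have h21 : M 2 1 = 0 := by
    refine (mul_eq_zero.mp ?_).resolve_left hc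
    linear_combination (1 - c) * E21 - s * E20 - M 2 1 * hcs
  have h10 : M 1 0 = -M 0 1 := mul_left_cancel₀ hs (by linear_combination -E00)
  have h11 : M 1 1 = M 0 0 := mul_left_cancel₀ hs (by linear_combination -E01)
  refine ⟨M 0 0, M 1 0, M 2 2, ?_⟩
  conv_lhs => rw [eta_fin_three M]
  rw [h02, h12, h20, h21, h11, h10, neg_neg]

theorem exists_eq_of_skewHermitian_block {a b d : ℂ}
    (hskew : (!![a, -b, 0; b, a, 0; 0, 0, d])ᴴ = -!![a, -b, 0; b, a, 0; 0, 0, d])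
    (htr : (!![a, -b, 0; b, a, 0; 0, 0, d]).trace = 0) :
    ∃ l m : ℝ,
      !![a, -b, 0; b, a, 0; 0, 0, d] = !![I * m, -l, 0; l, I * m, 0; 0, 0, -2 * I * m] := by
  have ha : conj a = -a := by simpa using congrFun (congrFun hskew 0) 0
  have hb : conj b = b := by simpa using congrFun (congrFun hskew 0) 1
  have hd : d = -2 * a := by
    rw [trace_fin_three_of] at htr
    linear_combination htr
  obtain ⟨l, rfl⟩ := conj_eq_iff_real.mp hb
  have hre : a.re = 0 := by
    have := congrArg re ha
    rw [conj_re, neg_re] at this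
    linarith
  have ha' : a = I * a.im := Complex.ext (by simp [hre]) (by simp)
  refine ⟨l, a.im, ?_⟩
  rw [hd, mul_assoc, ← ha']

section Complexification

variable {n : Type*} [Fintype n]

theorem map_ofReal_mul [DecidableEq n] (P Q : Matrix n n ℝ) :
    (P * Q).map ofReal = P.map ofReal * Q.map ofReal :=
  map_mul Complex.ofRealHom.mapMatrix P Q

theorem conjTranspose_conj_map_ofReal (P : Matrix n n ℝ) (A : Matrix n n ℂ) :
    (P.map ofReal * A * (P.map ofReal)ᵀ)ᴴ = P.map ofReal * Aᴴ * (P.map ofReal)ᵀ := by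
  have hP : (P.map ofReal)ᴴ = (P.map ofReal)ᵀ := by ext; simp
  rw [conjTranspose_mul, conjTranspose_mul, conjTranspose_transpose_eq_transpose_conjTranspose,
    hP, transpose_transpose, mul_assoc]

theorem trace_conj_map_ofReal [DecidableEq n] {P : Matrix n n ℝ}
    (hP : P ∈ orthogonalGroup n ℝ) (A : Matrix n n ℂ) :
    (P.map ofReal * A * (P.map ofReal)ᵀ).trace = A.trace := by
  rw [trace_mul_cycle, ← transpose_map, ← map_ofReal_mul, (mem_orthogonalGroup_iff' _ _).mp hP]
  simp

theorem map_ofReal_rotationZ (c s : ℝ) : (rotationZ c s).map ofReal = rotationZ (c : ℂ) s := by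
  ext i j; fin_cases i <;> fin_cases j <;> simp [rotationZ]

end Complexification

end Matrix

def stabilizerSO3 (A : Matrix (Fin 3) (Fin 3) ℂ) : Submonoid (Matrix (Fin 3) (Fin 3) ℝ) :=
  specialOrthogonalGroup (Fin 3) ℝ ⊓
    (Submonoid.centralizer {A}).comap Complex.ofRealHom.mapMatrix

theorem coe_stabilizerSO3 (A : Matrix (Fin 3) (Fin 3) ℂ) :
    (stabilizerSO3 A : Set (Matrix (Fin 3) (Fin 3) ℝ)) = {g | g * gᵀ = 1 ∧ g.det = 1 ∧
      g.map Complex.ofReal * A = A * g.map Complex.ofReal} := by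
  ext g
  simp only [stabilizerSO3, Submonoid.coe_inf, Submonoid.coe_comap, Set.mem_inter_iff,
    SetLike.mem_coe, mem_specialOrthogonalGroup_iff, mem_orthogonalGroup_iff, Set.mem_preimage,
    Submonoid.mem_centralizer_iff, Set.mem_singleton_iff, forall_eq, RingHom.mapMatrix_apply,
    Set.mem_ofPred_eq, and_assoc]
  rw [eq_comm (a := A * _)]
  rfl

theorem stmt_19 (A : Matrix (Fin 3) (Fin 3) ℂ)
    (hskew : Aᴴ = -A) (htr : A.trace = 0)
    (hstab : {g : Matrix (Fin 3) (Fin 3) ℝ |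
        g * gᵀ = 1 ∧ g.det = 1 ∧ g.map Complex.ofReal * A = A * g.map Complex.ofReal}.Infinite) :
    ∃ (g : Matrix (Fin 3) (Fin 3) ℝ) (l m : ℝ), g * gᵀ = 1 ∧ g.det = 1 ∧
      g.map Complex.ofReal * A * (g.map Complex.ofReal)ᵀ =
        !![I * m, -l, 0; l, I * m, 0; 0, 0, -2 * I * m] := by
  obtain ⟨g, hgS, hg⟩ : ∃ g ∈ stabilizerSO3 A, gᵀ ≠ g := by
    by_contra! h
    exact hstab (coe_stabilizerSO3 A ▸ finite_of_forall_transpose_eq inf_le_left h)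
  obtain ⟨P, hP, c, s, hcs, hPg⟩ := exists_conj_eq_rotationZ hgS.1
  have hs : s ≠ 0 := by
    rintro rfl
    exact hg (transpose_eq_self_of_conj hP.1 (by rw [hPg, rotationZ_transpose, neg_zero]))
  have hcomm : Commute (rotationZ (c : ℂ) s) (P.map ofReal * A * (P.map ofReal)ᵀ) := by
    rw [← map_ofReal_rotationZ, ← hPg, map_ofReal_mul, map_ofReal_mul, transpose_map]
    refine Commute.conj_of_mul_eq_one ?_ (Submonoid.mem_centralizer_iff.mp hgS.2 A rfl).symm
    rw [← transpose_map, ← map_ofReal_mul, (mem_orthogonalGroup_iff' _ _).mp hP.1,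
      Matrix.map_one _ ofReal_zero ofReal_one]
  obtain ⟨a, b, d, hblock⟩ :=
    exists_eq_of_commute_rotationZ (by exact_mod_cast hs) (by exact_mod_cast hcs) hcomm
  obtain ⟨l, m, hlm⟩ := exists_eq_of_skewHermitian_block
    (by rw [← hblock, conjTranspose_conj_map_ofReal, hskew]; noncomm_ring)
    (by rw [← hblock, trace_conj_map_ofReal hP.1, htr])
  exact ⟨P, l, m, (mem_orthogonalGroup_iff _ _).mp hP.1, (mem_specialOrthogonalGroup_iff.mp hP).2,
    hblock.trans hlm⟩
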